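/- arXiv:1903.08599 — 2 statements merged into one kernel-verified Lean document; each statement's English description precedes it below -/
import Mathlib

section
/- Let P₁ ∈ S^n, P₂ ∈ S^q, L ∈ ℝ^{n×q}, Q₁ ∈ ℝ^{n×m}, Q₂ ∈ ℝ^{q×p}, R₁ ∈ S^m, and R₂ ∈ S^p. There exists X ∈ S^q such that both symmetric block matrices [[P₁ − LXLᵀ, Q₁], [Q₁ᵀ, R₁]] and [[P₂ + X, Q₂], [Q₂ᵀ, R₂]] are positive definite if and only if the 3×3 symmetric block matrix [[P₁ + LP₂Lᵀ, Q₁, LQ₂], [Q₁ᵀ, R₁, 0], [Q₂ᵀLᵀ, 0, R₂]] is positive definite. -/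
/-!
Write `M = [[P₁, Q₁], [Q₁ᵀ, R₁]]`, `B = [L; 0]` and `S = Q₂R₂⁻¹Q₂ᵀ`. After reindexing, the big
matrix is `[[M + BP₂Bᵀ, BQ₂], [(BQ₂)ᵀ, R₂]]`, so by Schur complements with respect to `R₂` it is
positive definite iff `R₂ > 0` and `T = M + B(P₂ − S)Bᵀ > 0`, while the second small matrix is
positive definite iff `R₂ > 0` and `Y = P₂ + X − S > 0`. As `M − BXBᵀ = T − BYBᵀ`, one direction
follows from `T = (M − BXBᵀ) + BYBᵀ`. Conversely, `Y = (1 + BᵀT⁻¹B)⁻¹` works: `T − BYBᵀ` is a Schur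
complement of `[[T, B], [Bᵀ, Y⁻¹]]`, whose other Schur complement `Y⁻¹ − BᵀT⁻¹B = 1` is positive.
-/

open Matrix

/-- A 3×3 symmetric-pattern block matrix assembled from the indicated blocks. -/
def Matrix.block3 {n m p : Type*} (A : Matrix n n ℝ) (B : Matrix n m ℝ) (C : Matrix n p ℝ)
    (D : Matrix m n ℝ) (E : Matrix m m ℝ) (F : Matrix m p ℝ)
    (G : Matrix p n ℝ) (H : Matrix p m ℝ) (I : Matrix p p ℝ) :
    Matrix (n ⊕ (m ⊕ p)) (n ⊕ (m ⊕ p)) ℝ :=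
  Matrix.fromBlocks A (Matrix.fromCols B C) (Matrix.fromRows D G)
    (Matrix.fromBlocks E F H I)

open scoped ComplexOrder

namespace Matrix

variable {𝕜 : Type*} [RCLike 𝕜] {m n p : Type*}

theorem PosDef.toBlocks₂₂ {M : Matrix (m ⊕ n) (m ⊕ n) 𝕜} (h : M.PosDef) : M.toBlocks₂₂.PosDef :=
  h.submatrix Sum.inr_injective

theorem posDef_submatrix_equiv {M : Matrix n n 𝕜} (e : m ≃ n) :
    (M.submatrix e e).PosDef ↔ M.PosDef :=
  ⟨fun h ↦ by simpa using h.submatrix e.symm.injective, fun h ↦ h.submatrix e.injective⟩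

variable [Fintype m] [Fintype n] [Fintype p] [DecidableEq m] [DecidableEq n] [DecidableEq p]

theorem posDef_iff_posSemidef_and_det_ne_zero {A : Matrix n n 𝕜} :
    A.PosDef ↔ A.PosSemidef ∧ A.det ≠ 0 :=
  ⟨fun h ↦ ⟨h.posSemidef, h.posSemidef.posDef_iff_det_ne_zero.1 h⟩,
    fun h ↦ h.1.posDef_iff_det_ne_zero.2 h.2⟩

theorem posDef_fromBlocks₁₁_iff {A : Matrix m m 𝕜} (hA : A.PosDef) (B : Matrix m n 𝕜)
    (D : Matrix n n 𝕜) :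
    (fromBlocks A B Bᴴ D).PosDef ↔ (D - Bᴴ * A⁻¹ * B).PosDef := by
  have := hA.isUnit.invertible
  simp only [posDef_iff_posSemidef_and_det_ne_zero (A := fromBlocks _ _ _ _),
    posDef_iff_posSemidef_and_det_ne_zero (A := D - _), PosDef.fromBlocks₁₁ B D hA,
    det_fromBlocks₁₁, invOf_eq_nonsing_inv, mul_ne_zero_iff, hA.det_pos.ne', ne_eq,
    not_false_eq_true, true_and]

theorem posDef_fromBlocks₂₂_iff (A : Matrix m m 𝕜) (B : Matrix m n 𝕜) {D : Matrix n n 𝕜}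
    (hD : D.PosDef) :
    (fromBlocks A B Bᴴ D).PosDef ↔ (A - B * D⁻¹ * Bᴴ).PosDef := by
  have := hD.isUnit.invertible
  simp only [posDef_iff_posSemidef_and_det_ne_zero (A := fromBlocks _ _ _ _),
    posDef_iff_posSemidef_and_det_ne_zero (A := A - _), PosDef.fromBlocks₂₂ A B hD,
    det_fromBlocks₂₂, invOf_eq_nonsing_inv, mul_ne_zero_iff, hD.det_pos.ne', ne_eq,
    not_false_eq_true, true_and]

theorem PosDef.exists_posDef_sub_mul_mul_conjTranspose {T : Matrix m m 𝕜} (hT : T.PosDef)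
    (B : Matrix m n 𝕜) : ∃ Y : Matrix n n 𝕜, Y.PosDef ∧ (T - B * Y * Bᴴ).PosDef := by
  set W : Matrix n n 𝕜 := 1 + Bᴴ * T⁻¹ * B
  have hW : W.PosDef := PosDef.one.add_posSemidef (hT.inv.posSemidef.conjTranspose_mul_mul_same B)
  have hblock : (fromBlocks T B Bᴴ W).PosDef := by
    rw [posDef_fromBlocks₁₁_iff hT, add_sub_cancel_right]
    exact PosDef.one
  exact ⟨W⁻¹, hW.inv, (posDef_fromBlocks₂₂_iff T B hW).1 hblock⟩

theorem exists_posDef_splitting_iff_posDef_fromBlocks (M : Matrix m m 𝕜) (B : Matrix m n 𝕜)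
    {P : Matrix n n 𝕜} (hP : P.IsHermitian) (Q : Matrix n p 𝕜) (R : Matrix p p 𝕜) :
    (∃ X : Matrix n n 𝕜, X.IsHermitian ∧ (M - B * X * Bᴴ).PosDef ∧
        (fromBlocks (P + X) Q Qᴴ R).PosDef) ↔
      (fromBlocks (M + B * P * Bᴴ) (B * Q) (B * Q)ᴴ R).PosDef := by
  constructor
  · rintro ⟨X, -, hM, hPX⟩
    have hR : R.PosDef := by simpa using hPX.toBlocks₂₂
    rw [posDef_fromBlocks₂₂_iff _ _ hR] at hPX ⊢
    have hsplit : M + B * P * Bᴴ - B * Q * R⁻¹ * (B * Q)ᴴ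
        = (M - B * X * Bᴴ) + B * (P + X - Q * R⁻¹ * Qᴴ) * Bᴴ := by
      simp only [conjTranspose_mul, Matrix.mul_sub, Matrix.mul_add, Matrix.sub_mul,
        Matrix.add_mul, Matrix.mul_assoc]
      abel
    rw [hsplit]
    exact hM.add_posSemidef (hPX.posSemidef.mul_mul_conjTranspose_same B)
  · intro h
    have hR : R.PosDef := by simpa using h.toBlocks₂₂
    rw [posDef_fromBlocks₂₂_iff _ _ hR] at h
    obtain ⟨Y, hY, hT⟩ := h.exists_posDef_sub_mul_mul_conjTranspose B
    set S := Q * R⁻¹ * Qᴴ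
    refine ⟨S - P + Y, ((isHermitian_mul_mul_conjTranspose Q hR.inv.1).sub hP).add hY.1, ?_, ?_⟩
    · convert hT using 1
      simp only [S, conjTranspose_mul, Matrix.mul_sub, Matrix.mul_add, Matrix.sub_mul,
        Matrix.add_mul, Matrix.mul_assoc]
      abel
    · rw [posDef_fromBlocks₂₂_iff _ _ hR]
      convert hY using 1
      abel

end Matrix

theorem Matrix.fromBlocks_add_fromRows_mul_mul_transpose {R : Type*} [Ring R]
    {n m q : Type*} [Fintype q] (A : Matrix n n R) (B : Matrix n m R) (C : Matrix m n R)
    (D : Matrix m m R) (L : Matrix n q R) (Z : Matrix q q R) :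
    fromBlocks (A + L * Z * Lᵀ) B C D
      = fromBlocks A B C D + fromRows L 0 * Z * (fromRows L (0 : Matrix m q R))ᵀ := by
  rw [fromRows_mul, transpose_fromRows, fromRows_mul_fromCols, fromBlocks_add]
  simp

theorem Matrix.block3_eq_submatrix_fromBlocks {n m p : Type*} (A : Matrix n n ℝ)
    (B : Matrix n m ℝ) (C : Matrix n p ℝ) (D : Matrix m n ℝ) (E : Matrix m m ℝ)
    (F : Matrix m p ℝ) (G : Matrix p n ℝ) (H : Matrix p m ℝ) (I : Matrix p p ℝ) :
    block3 A B C D E F G H I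
      = (fromBlocks (fromBlocks A B D E) (fromRows C F) (fromCols G H) I).submatrix
          (Equiv.sumAssoc n m p).symm (Equiv.sumAssoc n m p).symm := by
  ext (i | i | i) (j | j | j) <;> rfl

theorem two_posdef_blocks_iff_big_block_general (n q m p : ℕ)
    (P1 : Matrix (Fin n) (Fin n) ℝ) (P2 : Matrix (Fin q) (Fin q) ℝ)
    (L : Matrix (Fin n) (Fin q) ℝ) (Q1 : Matrix (Fin n) (Fin m) ℝ)
    (Q2 : Matrix (Fin q) (Fin p) ℝ) (R1 : Matrix (Fin m) (Fin m) ℝ)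
    (R2 : Matrix (Fin p) (Fin p) ℝ)
    (hP2 : P2.IsSymm) :
    (∃ X : Matrix (Fin q) (Fin q) ℝ, X.IsSymm ∧
        (Matrix.fromBlocks (P1 - L * X * Lᵀ) Q1 Q1ᵀ R1).PosDef ∧
        (Matrix.fromBlocks (P2 + X) Q2 Q2ᵀ R2).PosDef) ↔
      (Matrix.block3 (P1 + L * P2 * Lᵀ) Q1 (L * Q2) Q1ᵀ R1 0 (L * Q2)ᵀ 0 R2).PosDef := by
  have hfirst (X : Matrix (Fin q) (Fin q) ℝ) : fromBlocks (P1 - L * X * Lᵀ) Q1 Q1ᵀ R1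
      = fromBlocks P1 Q1 Q1ᵀ R1 - fromRows L 0 * X * (fromRows L (0 : Matrix (Fin m) _ ℝ))ᵀ := by
    have := fromBlocks_add_fromRows_mul_mul_transpose P1 Q1 Q1ᵀ R1 L (-X)
    simpa only [Matrix.mul_neg, Matrix.neg_mul, ← sub_eq_add_neg] using this
  have hbig : block3 (P1 + L * P2 * Lᵀ) Q1 (L * Q2) Q1ᵀ R1 0 (L * Q2)ᵀ 0 R2
      = (fromBlocks (fromBlocks P1 Q1 Q1ᵀ R1 + fromRows L 0 * P2 * (fromRows L 0)ᵀ)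
          (fromRows L 0 * Q2) (fromRows L 0 * Q2)ᵀ R2).submatrix
        (Equiv.sumAssoc _ _ _).symm (Equiv.sumAssoc _ _ _).symm := by
    have hQ : fromRows L (0 : Matrix (Fin m) _ ℝ) * Q2 = fromRows (L * Q2) 0 := by
      rw [fromRows_mul, Matrix.zero_mul]
    rw [block3_eq_submatrix_fromBlocks, fromBlocks_add_fromRows_mul_mul_transpose, hQ]
    simp only [transpose_fromRows, transpose_zero]
  have key := exists_posDef_splitting_iff_posDef_fromBlocks (fromBlocks P1 Q1 Q1ᵀ R1)
    (fromRows L (0 : Matrix (Fin m) _ ℝ)) (isHermitian_iff_isSymm.2 hP2) Q2 R2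
  simp only [conjTranspose_eq_transpose_of_trivial, isHermitian_iff_isSymm] at key
  simp only [hbig, posDef_submatrix_equiv, hfirst, key]

/-- There exists a symmetric `X ∈ S^q` with `[[P₁ − LXLᵀ, Q₁], [Q₁ᵀ, R₁]] > 0` and
`[[P₂ + X, Q₂], [Q₂ᵀ, R₂]] > 0` iff
`[[P₁ + LP₂Lᵀ, Q₁, LQ₂], [Q₁ᵀ, R₁, 0], [Q₂ᵀLᵀ, 0, R₂]] > 0`. -/
theorem two_posdef_blocks_iff_big_block (n q m p : ℕ)
    (P1 : Matrix (Fin n) (Fin n) ℝ) (P2 : Matrix (Fin q) (Fin q) ℝ)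
    (L : Matrix (Fin n) (Fin q) ℝ) (Q1 : Matrix (Fin n) (Fin m) ℝ)
    (Q2 : Matrix (Fin q) (Fin p) ℝ) (R1 : Matrix (Fin m) (Fin m) ℝ)
    (R2 : Matrix (Fin p) (Fin p) ℝ)
    (hP1 : P1.IsSymm) (hP2 : P2.IsSymm) (hR1 : R1.IsSymm) (hR2 : R2.IsSymm) :
    (∃ X : Matrix (Fin q) (Fin q) ℝ, X.IsSymm ∧
        (Matrix.fromBlocks (P1 - L * X * Lᵀ) Q1 Q1ᵀ R1).PosDef ∧
        (Matrix.fromBlocks (P2 + X) Q2 Q2ᵀ R2).PosDef) ↔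
      (Matrix.block3 (P1 + L * P2 * Lᵀ) Q1 (L * Q2) Q1ᵀ R1 0 (L * Q2)ᵀ 0 R2).PosDef :=
  two_posdef_blocks_iff_big_block_general n q m p P1 P2 L Q1 Q2 R1 R2 hP2
end

section
/- (S-variable characterization of the continuous-time Lyapunov inequality) Let A ∈ ℝ^{n×n}. There exists a symmetric positive definite P ∈ S^n such that AᵀP + PA is negative definite if and only if there exist a symmetric positive definite P ∈ S^n and matrices F₁, F₂ ∈ ℝ^{n×n} such that the symmetric block matrix [[F₁A + AᵀF₁ᵀ, P − F₁ + AᵀF₂ᵀ], [(P − F₁ + AᵀF₂ᵀ)ᵀ, −(F₂ + F₂ᵀ)]] is negative definite. -/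
/-!
Forward direction: take `F₁ = P` and `F₂ = 2t • 1`. With `Q = -(AᵀP + PA)`, the negated block
matrix factors as `Lᵀ · diag(Q - t AᵀA, t • 1) · L` for the invertible `L = [[1, 0], [-A, 2]]`,
and `Q - t AᵀA` stays positive definite for small `t > 0` since positive definiteness of a
quadratic form is an open condition on the (compact) unit sphere.

Backward direction: restricting the block matrix to the graph `{(x, Ax)}`, i.e. conjugating by
`[[1], [A]]`, kills `F₁` and `F₂` and leaves `AᵀP + PA`.
-/

open Matrix Filter Topology Set

namespace Matrix

section Blocks

variable {l m n R : Type*}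

theorem PosDef.fromBlocks_zero_zero [Fintype m] [Fintype n] [Ring R] [PartialOrder R] [StarRing R]
    [IsOrderedAddMonoid R] {A : Matrix m m R} {D : Matrix n n R} (hA : A.PosDef)
    (hD : D.PosDef) : (fromBlocks A 0 0 D).PosDef := by
  refine .of_dotProduct_mulVec_pos (hA.1.fromBlocks (by simp) hD.1) fun z hz => ?_
  obtain ⟨x, y, rfl⟩ : ∃ x y, z = Sum.elim x y := ⟨_, _, (Sum.elim_comp_inl_inr z).symm⟩
  simp only [fromBlocks_mulVec, zero_mulVec, add_zero, zero_add, Function.star_sumElim,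
    sumElim_dotProduct_sumElim]
  obtain rfl | hx := eq_or_ne x 0
  · have hy : y ≠ 0 := by rintro rfl; exact hz (by simp)
    simpa using hD.dotProduct_mulVec_pos hy
  · exact add_pos_of_pos_of_nonneg (hA.dotProduct_mulVec_pos hx)
      (hD.posSemidef.dotProduct_mulVec_nonneg y)

theorem conjTranspose_fromRows_mul_fromBlocks_mul_fromRows [Fintype l] [Fintype m] [Ring R]
    [StarRing R] (C₁ : Matrix l n R) (C₂ : Matrix m n R) (B₁₁ : Matrix l l R) (B₁₂ : Matrix l m R)
    (B₂₁ : Matrix m l R) (B₂₂ : Matrix m m R) :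
    (fromRows C₁ C₂)ᴴ * fromBlocks B₁₁ B₁₂ B₂₁ B₂₂ * fromRows C₁ C₂ =
      C₁ᴴ * B₁₁ * C₁ + C₁ᴴ * B₁₂ * C₂ + C₂ᴴ * B₂₁ * C₁ + C₂ᴴ * B₂₂ * C₂ := by
  rw [conjTranspose_fromRows_eq_fromCols_conjTranspose, Matrix.mul_assoc, fromBlocks_mul_fromRows,
    fromCols_mul_fromRows]
  simp only [Matrix.mul_add, Matrix.mul_assoc]
  abel

theorem mulVec_injective_fromRows_one [Fintype n] [DecidableEq n] [Ring R] (A : Matrix m n R) :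
    Function.Injective (fromRows (1 : Matrix n n R) A).mulVec := fun x y h => by
  simpa [fromRows_mulVec] using congrArg (· ∘ Sum.inl) h

end Blocks

section Real

variable {ι : Type*} [Fintype ι]

theorem smul_dotProduct_mulVec_smul (M : Matrix ι ι ℝ) (c : ℝ) (x : ι → ℝ) :
    (c • x) ⬝ᵥ (M *ᵥ (c • x)) = c ^ 2 * (x ⬝ᵥ (M *ᵥ x)) := by
  simp only [mulVec_smul, dotProduct_smul, smul_dotProduct, smul_eq_mul]
  ring

theorem PosDef.exists_pos_posDef_sub_smul {Q S : Matrix ι ι ℝ} (hQ : Q.PosDef)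
    (hS : S.IsHermitian) : ∃ t : ℝ, 0 < t ∧ (Q - t • S).PosDef := by
  set K := Metric.sphere (0 : ι → ℝ) 1
  have hform : Continuous fun p : ℝ × (ι → ℝ) => p.2 ⬝ᵥ ((Q - p.1 • S) *ᵥ p.2) := by
    fun_prop
  have hnear : ∀ᶠ t in 𝓝 (0 : ℝ), ∀ u ∈ K, 0 < u ⬝ᵥ ((Q - t • S) *ᵥ u) := by
    refine (isCompact_sphere 0 1).eventually_forall_of_forall_eventually fun u hu => ?_
    refine continuousAt_const.eventually_lt hform.continuousAt ?_
    simpa using hQ.dotProduct_mulVec_pos (ne_zero_of_mem_unit_sphere ⟨u, hu⟩)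
  obtain ⟨t, htK, ht⟩ := ((hnear.filter_mono nhdsWithin_le_nhds).and
    (self_mem_nhdsWithin : Ioi (0 : ℝ) ∈ 𝓝[>] 0)).exists
  refine ⟨t, ht, .of_dotProduct_mulVec_pos (hQ.1.sub (hS.smul (.all t))) fun x hx => ?_⟩
  have hx' : ‖x‖ ≠ 0 := norm_ne_zero_iff.mpr hx
  have hu : ‖x‖⁻¹ • x ∈ K := by simp [K, norm_smul, hx']
  have hxu : x = ‖x‖ • ‖x‖⁻¹ • x := by rw [smul_smul, mul_inv_cancel₀ hx', one_smul]
  rw [star_trivial, hxu, smul_dotProduct_mulVec_smul]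
  exact mul_pos (by positivity) (htK _ hu)

end Real

end Matrix

section Lyapunov

variable {n R : Type*} [Fintype n] [DecidableEq n] [CommRing R] [StarRing R] [TrivialStar R]

theorem neg_fromBlocks_lyapunov_eq_conjTranspose_mul_mul (A P : Matrix n n R) (hP : Pᵀ = P)
    (t : R) :
    -fromBlocks (P * A + Aᵀ * Pᵀ) (P - P + Aᵀ * ((2 * t) • (1 : Matrix n n R))ᵀ)
      (P - P + Aᵀ * ((2 * t) • (1 : Matrix n n R))ᵀ)ᵀ
      (-((2 * t) • 1 + ((2 * t) • (1 : Matrix n n R))ᵀ)) =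
    (fromBlocks 1 0 (-A) ((2 : R) • 1))ᴴ *
      fromBlocks (-(Aᵀ * P + P * A) - t • (Aᵀ * A)) 0 0 (t • 1) *
      fromBlocks 1 0 (-A) ((2 : R) • 1) := by
  simp only [conjTranspose_eq_transpose_of_trivial, fromBlocks_transpose, fromBlocks_multiply,
    fromBlocks_neg]
  congr 1 <;>
    simp only [hP, sub_self, transpose_smul, transpose_one, transpose_neg, transpose_zero,
      transpose_transpose, Matrix.mul_one, Matrix.one_mul, Matrix.mul_zero, Matrix.zero_mul,
      Matrix.mul_smul, Matrix.smul_mul, Matrix.mul_neg, Matrix.neg_mul, add_zero, zero_add] <;>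
    module

theorem conjTranspose_fromRows_one_mul_neg_fromBlocks_lyapunov (A P F₁ F₂ : Matrix n n R)
    (hP : Pᵀ = P) :
    (fromRows (1 : Matrix n n R) A)ᴴ * -fromBlocks (F₁ * A + Aᵀ * F₁ᵀ) (P - F₁ + Aᵀ * F₂ᵀ)
      (P - F₁ + Aᵀ * F₂ᵀ)ᵀ (-(F₂ + F₂ᵀ)) * fromRows (1 : Matrix n n R) A =
        -(Aᵀ * P + P * A) := by
  rw [fromBlocks_neg, conjTranspose_fromRows_mul_fromBlocks_mul_fromRows]
  simp only [conjTranspose_eq_transpose_of_trivial, transpose_one, transpose_add, transpose_sub,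
    transpose_mul, transpose_transpose, hP, Matrix.one_mul, Matrix.mul_one]
  noncomm_ring

end Lyapunov

/-- S-variable characterization of the continuous-time Lyapunov inequality:
there exists `P > 0` with `AᵀP + PA < 0` iff there exist `P > 0` and `F₁, F₂` such that
`[[F₁A + AᵀF₁ᵀ, P − F₁ + AᵀF₂ᵀ], [(P − F₁ + AᵀF₂ᵀ)ᵀ, −(F₂ + F₂ᵀ)]] < 0`. -/
theorem s_variable_lyapunov (n : ℕ) (A : Matrix (Fin n) (Fin n) ℝ) :
    (∃ P : Matrix (Fin n) (Fin n) ℝ, P.PosDef ∧ (-(Aᵀ * P + P * A)).PosDef) ↔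
      (∃ (P F₁ F₂ : Matrix (Fin n) (Fin n) ℝ), P.PosDef ∧
        (-(Matrix.fromBlocks (F₁ * A + Aᵀ * F₁ᵀ) (P - F₁ + Aᵀ * F₂ᵀ)
            (P - F₁ + Aᵀ * F₂ᵀ)ᵀ (-(F₂ + F₂ᵀ)))).PosDef) := by
  constructor
  · rintro ⟨P, hP, hQ⟩
    obtain ⟨t, ht, hR⟩ := hQ.exists_pos_posDef_sub_smul (S := Aᵀ * A)
      (by simpa using isHermitian_conjTranspose_mul_self A)
    have hL : Function.Injective (fromBlocks 1 0 (-A) ((2 : ℝ) • 1)).mulVec :=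
      mulVec_injective_iff_isUnit.mpr <| isUnit_fromBlocks_zero₁₂.mpr
        ⟨isUnit_one, isUnit_one.smul (Units.mk0 (2 : ℝ) two_ne_zero)⟩
    refine ⟨P, P, (2 * t) • 1, hP, ?_⟩
    rw [neg_fromBlocks_lyapunov_eq_conjTranspose_mul_mul A P (isHermitian_iff_isSymm.mp hP.1) t]
    exact (hR.fromBlocks_zero_zero (PosDef.one.smul ht)).conjTranspose_mul_mul_same hL
  · rintro ⟨P, F₁, F₂, hP, hM⟩
    refine ⟨P, hP, ?_⟩
    rw [← conjTranspose_fromRows_one_mul_neg_fromBlocks_lyapunov A P F₁ F₂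
      (isHermitian_iff_isSymm.mp hP.1)]
    exact hM.conjTranspose_mul_mul_same (mulVec_injective_fromRows_one A)
end
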